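/- Let D be a central division algebra of degree n over a field K and let P be a maximal subfield of D (so [P : K] = n). Then P splits D, i.e., D ⊗_K P is isomorphic as a P-algebra to the matrix algebra M_n(P). -/

import Mathlib

/-!
Left multiplication of `D` on itself commutes with right multiplication through `f`, so `D` is a
`(D, P)`-bimodule and we get a `P`-algebra map `P ⊗[K] D → End_P(D)`. It is injective because
`P ⊗[K] D` is simple: in a nonzero two-sided ideal, take an element of minimal support in a
`K`-basis of `P`, scale one `D`-coefficient to `1`; its commutators with all `1 ⊗ x` have smaller
support, hence vanish, so its coefficients are central, i.e. lie in `K`, and the element is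
`q ⊗ 1` with `q ≠ 0`, a unit. Both sides have `P`-dimension `n²`, so the map is an isomorphism,
and `End_P(D) ≅ Mₙ(P)` because `dim_P D = n`.
-/

open Module TensorProduct

theorem Module.finrank_eq_of_finrank_eq_sq {K P M : Type*} [Field K] [Field P] [Algebra K P]
    [AddCommGroup M] [Module K M] [Module P M] [IsScalarTower K P M] [FiniteDimensional K M]
    [Nontrivial M] (h : finrank K M = finrank K P ^ 2) : finrank P M = finrank K P := by
  have hpos : 0 < finrank K P := Nat.pos_of_ne_zero fun h0 => by
    simpa [h0, h] using (finrank_pos (R := K) (M := M)).ne'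
  refine Nat.eq_of_mul_eq_mul_left hpos ?_
  rw [finrank_mul_finrank, h, sq]

namespace Algebra.TensorProduct

section Coefficients

variable {R B D ι : Type*} [CommSemiring R] [Semiring B] [Algebra R B] [Semiring D] [Algebra R D]
  [DecidableEq ι] (b : Basis ι R B)

theorem equivFinsuppOfBasisLeft_one_tmul_mul (x : D) (t : B ⊗[R] D) (j : ι) :
    equivFinsuppOfBasisLeft b ((1 ⊗ₜ x) * t) j = x * equivFinsuppOfBasisLeft b t j := by
  induction t using TensorProduct.induction_on with
  | zero => simp
  | tmul p d => simp
  | add s t hs ht => simp [mul_add, hs, ht]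

theorem equivFinsuppOfBasisLeft_mul_one_tmul (x : D) (t : B ⊗[R] D) (j : ι) :
    equivFinsuppOfBasisLeft b (t * (1 ⊗ₜ x)) j = equivFinsuppOfBasisLeft b t j * x := by
  induction t using TensorProduct.induction_on with
  | zero => simp
  | tmul p d => simp
  | add s t hs ht => simp [add_mul, hs, ht]

theorem exists_tmul_one_eq_of_forall_coeff_mem_range {t : B ⊗[R] D}
    (h : ∀ j, ∃ a : R, equivFinsuppOfBasisLeft b t j = algebraMap R D a) :
    ∃ q : B, q ⊗ₜ[R] (1 : D) = t := by
  choose a ha using h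
  refine ⟨∑ j ∈ (equivFinsuppOfBasisLeft b t).support, a j • b j, ?_⟩
  calc _ = (equivFinsuppOfBasisLeft b t).sum fun j d ↦ b j ⊗ₜ[R] d := by
        rw [Finsupp.sum, TensorProduct.sum_tmul]
        refine Finset.sum_congr rfl fun j _ => ?_
        rw [ha, Algebra.algebraMap_eq_smul_one, TensorProduct.smul_tmul]
    _ = t := by rw [← equivFinsuppOfBasisLeft_symm_apply, LinearEquiv.symm_apply_apply]

end Coefficients

section Simple

variable {K B D : Type*} [Field K] [Ring B] [Algebra K B] [DivisionRing D] [Algebra K D]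

theorem exists_ne_zero_tmul_one_mem [Algebra.IsCentral K D] (I : TwoSidedIdeal (B ⊗[K] D))
    {t : B ⊗[K] D} (htI : t ∈ I) (ht : t ≠ 0) : ∃ q : B, q ≠ 0 ∧ q ⊗ₜ[K] (1 : D) ∈ I := by
  classical
  let b := Basis.ofVectorSpace K B
  set ρ : B ⊗[K] D ≃ₗ[K] _ →₀ D := equivFinsuppOfBasisLeft b
  have hρ_comm (x : D) (u : B ⊗[K] D) (j) :
      ρ ((1 ⊗ₜ x) * u - u * (1 ⊗ₜ x)) j = x * ρ u j - ρ u j * x := by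
    simp [ρ, equivFinsuppOfBasisLeft_one_tmul_mul, equivFinsuppOfBasisLeft_mul_one_tmul]
  induction hm : (ρ t).support.card using Nat.strong_induction_on generalizing t with
  | _ m ih =>
  obtain ⟨j₀, hj₀⟩ : (ρ t).support.Nonempty := by simpa using ht
  set c := ρ t j₀
  have hc : c ≠ 0 := Finsupp.mem_support_iff.mp hj₀
  set u := t * (1 ⊗ₜ c⁻¹)
  have huI : u ∈ I := I.mul_mem_right _ _ htI
  have hu (j) : ρ u j = ρ t j * c⁻¹ := equivFinsuppOfBasisLeft_mul_one_tmul b _ _ _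
  have hu₀ : ρ u j₀ = 1 := by rw [hu, mul_inv_cancel₀ hc]
  -- either `u` commutes with every `1 ⊗ x`, or some commutator has smaller support
  by_cases hcomm : ∀ x : D, (1 ⊗ₜ x) * u - u * (1 ⊗ₜ x) = 0
  · obtain ⟨q, hq⟩ := exists_tmul_one_eq_of_forall_coeff_mem_range b fun j =>
      (Algebra.IsCentral.mem_center_iff K).mp <| Subalgebra.mem_center_iff.mpr fun x =>
        sub_eq_zero.mp <| by rw [← hρ_comm, hcomm x]; rfl
    refine ⟨q, ?_, hq ▸ huI⟩
    rintro rfl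
    simp [← hq] at hu₀
  · obtain ⟨x, hx⟩ := not_forall.mp hcomm
    refine ih _ ?_ (I.sub_mem (I.mul_mem_left _ _ huI) (I.mul_mem_right _ _ huI)) hx rfl
    rw [← hm]
    refine Finset.card_lt_card (Finset.ssubset_of_subset_of_ssubset (fun j hj => ?_)
      (Finset.erase_ssubset hj₀))
    rw [Finsupp.mem_support_iff, hρ_comm] at hj
    refine Finset.mem_erase.mpr ⟨fun hjj => hj (by rw [hjj, hu₀, one_mul, mul_one, sub_self]), ?_⟩
    refine Finsupp.mem_support_iff.mpr fun h0 => hj ?_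
    rw [hu, h0, zero_mul, mul_zero, zero_mul, sub_self]

instance isSimpleRing [IsSimpleRing B] [Algebra.IsCentral K D] : IsSimpleRing (B ⊗[K] D) :=
  .of_eq_bot_or_eq_top fun I => or_iff_not_imp_left.mpr fun hI => by
    obtain ⟨t, htI, ht⟩ := SetLike.exists_of_lt (bot_lt_iff_ne_bot.mpr hI)
    obtain ⟨q, hq, hqI⟩ := exists_ne_zero_tmul_one_mem I htI ht
    let incl : B →ₐ[K] B ⊗[K] D := includeLeft
    have : (1 : B) ∈ TwoSidedIdeal.comap incl I :=
      IsSimpleRing.one_mem_of_ne_zero_mem _ hq ((TwoSidedIdeal.mem_comap incl).mpr hqI)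
    exact I.one_mem_iff.mp ((TwoSidedIdeal.mem_comap incl).mp this)

end Simple

variable (K P D : Type*) [CommSemiring K] [CommSemiring P] [Semiring D] [Algebra K P]
  [Algebra K D] [Module P D] [IsScalarTower K P D] [SMulCommClass D P D] in
/-- `p ⊗ d ↦ (x ↦ p • (d * x))`. -/
def toEnd : P ⊗[K] D →ₐ[P] Module.End P D :=
  lift (Algebra.ofId P _) (Algebra.lsmul K P D) fun _ _ => Algebra.commute_algebraMap_left _ _

theorem toEnd_bijective {K P D : Type*} [Field K] [Field P] [DivisionRing D] [Algebra K P]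
    [Algebra K D] [Module P D] [IsScalarTower K P D] [SMulCommClass D P D]
    [Algebra.IsCentral K D] [FiniteDimensional K D] (h : finrank K D = finrank K P ^ 2) :
    Function.Bijective (toEnd K P D) := by
  have hinj : Function.Injective (toEnd K P D) := (toEnd K P D).toRingHom.injective
  have : FiniteDimensional P D := .of_restrictScalars_finite K P D
  have hrank : finrank P (P ⊗[K] D) = finrank P (Module.End P D) := by
    rw [finrank_baseChange, finrank_linearMap, finrank_eq_of_finrank_eq_sq h, h, sq]
  exact ⟨hinj, (LinearMap.injective_iff_surjective_of_finrank_eq_finrank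
    (f := (toEnd K P D).toLinearMap) hrank).mp hinj⟩

end Algebra.TensorProduct

theorem maximal_subfield_splits_general
    (K D : Type) [Field K] [DivisionRing D] [Algebra K D]
    [Algebra.IsCentral K D] [FiniteDimensional K D]
    (n : ℕ) (hdim : Module.finrank K D = n ^ 2)
    (P : Type) [Field P] [Algebra K P]
    (f : P →ₐ[K] D)
    (hdeg : Module.finrank K P = n) :
    Nonempty ((P ⊗[K] D) ≃ₐ[P] Matrix (Fin n) (Fin n) P) := by
  let : Module P D := Module.compHom D (f.toRingHom.toOpposite fun x y => (Commute.all x y).map f)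
  have : IsScalarTower K P D :=
    ⟨fun k p x => show x * f (k • p) = k • (x * f p) by rw [map_smul, mul_smul_comm]⟩
  have : SMulCommClass D P D := ⟨fun d p x => (mul_assoc d x (f p)).symm⟩
  have hsq : finrank K D = finrank K P ^ 2 := by rw [hdim, hdeg]
  have hPD : finrank P D = n := (finrank_eq_of_finrank_eq_sq hsq).trans hdeg
  have : FiniteDimensional P D := .of_restrictScalars_finite K P D
  exact ⟨(AlgEquiv.ofBijective _ (Algebra.TensorProduct.toEnd_bijective hsq)).trans
    (algEquivMatrix ((finBasis P D).reindex (finCongr hPD)))⟩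

/-- Let `D` be a central division algebra of degree `n` over a field `K` and
let `P` be a maximal subfield of `D` (so `[P : K] = n`), formalized as a field extension
`P/K` together with a `K`-embedding `f : P →ₐ[K] D` whose image is maximal among commutative
`K`-subalgebras of `D`. Then `P` splits `D`:
`D ⊗[K] P ≃ M_n(P)` as `P`-algebras. -/
theorem maximal_subfield_splits
    (K D : Type) [Field K] [DivisionRing D] [Algebra K D]
    [Algebra.IsCentral K D] [FiniteDimensional K D]
    (n : ℕ) (hn : 0 < n) (hdim : Module.finrank K D = n ^ 2)
    (P : Type) [Field P] [Algebra K P]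
    (f : P →ₐ[K] D)
    (hmax : ∀ Q : Subalgebra K D, (∀ x ∈ Q, ∀ y ∈ Q, x * y = y * x) → f.range ≤ Q →
      Q = f.range)
    (hdeg : Module.finrank K P = n) :
    Nonempty ((P ⊗[K] D) ≃ₐ[P] Matrix (Fin n) (Fin n) P) :=
  maximal_subfield_splits_general K D n hdim P f hdeg
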